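/- With G(t,q) = ∏_{k≥1} ∏_{j=0}^{4} (1 - (-t)^{2k-2+j} q^k)^{(-1)^{j+1} b_j} ∈ ℤ[[t,q]] and b_0 = 1, for every n ≥ 2 the coefficient of t^2 q^n in G(t,q) equals b_2 + binomial(b_1, 2) + 1. -/

import Mathlib

open PowerSeries Finset

/-- The ring `ℤ[[t]][[q]] = ℤ[[t,q]]`; the inner variable is `t`, the outer is `q`. -/
abbrev TQ : Type := PowerSeries (PowerSeries ℤ)

/-- `t` as an element of `ℤ[[t]]`. -/
noncomputable abbrev tVar : PowerSeries ℤ := PowerSeries.X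

/-- The factor `1 - (-t)^(2k-2+j) q^k` of Göttsche's product, as a unit of
`ℤ[[t,q]]`; here `k ≥ 1` is indexed by `k+1`, so the exponent `2k-2+j` becomes
`2k+j`. -/
noncomputable def gFactor (k j : ℕ) : TQˣ where
  val := 1 - PowerSeries.C ((-tVar) ^ (2 * k + j)) * X ^ (k + 1)
  inv := PowerSeries.invOfUnit
    (1 - PowerSeries.C ((-tVar) ^ (2 * k + j)) * X ^ (k + 1)) 1
  val_inv := PowerSeries.mul_invOfUnit _ 1 (by simp)
  inv_val := by
    rw [mul_comm]
    exact PowerSeries.mul_invOfUnit _ 1 (by simp)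

/-- The partial product over `1 ≤ k ≤ N` of Göttsche's generating function
`G(t,q) = ∏_{k≥1} ∏_{j=0}^{4} (1 - (-t)^{2k-2+j} q^k)^{(-1)^{j+1} b_j}`.
Factors with `k > n` do not change the coefficient of `q^n`, so coefficients of
`G` are read off from these partial products. -/
noncomputable def gPart (b0 b1 b2 b3 b4 N : ℕ) : TQˣ :=
  ∏ k ∈ range N,
    (gFactor k 1) ^ b1 * (gFactor k 3) ^ b3 *
      ((gFactor k 0) ^ b0 * (gFactor k 2) ^ b2 * (gFactor k 4) ^ b4)⁻¹

/-!
Reduce modulo `t³`: in `ℤ[[t]]/(t³)` every factor of `G` with `(-t)`-exponent at least `3`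
becomes `1`, leaving `(1 + tq)^{b₁} / ((1 - q)(1 - t²q)^{b₂}(1 - t²q²))`. Since `t³ = 0` the
numerator and the `b₂` factors expand to quadratic polynomials in `q`, so `(1 - q)` times the
truncated series is a polynomial of degree `2` in `q`, and for `n ≥ 2` the coefficient of `q^n`
is the sum of its coefficients, `1 + b₁t + (b₂ + C(b₁,2) + 1)t²`.
-/

section CommRing

variable {R : Type*} [CommRing R]

lemma one_add_pow_of_pow_three_eq_zero {a : R} (ha : a ^ 3 = 0) (m : ℕ) :
    (1 + a) ^ m = 1 + m * a + m.choose 2 * a ^ 2 := by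
  induction m with
  | zero => simp
  | succ m ih =>
    rw [pow_succ, ih, Nat.choose_succ_succ', Nat.choose_one_right]
    push_cast
    linear_combination (m.choose 2 : R) * ha

lemma one_add_pow_of_sq_eq_zero {a : R} (ha : a ^ 2 = 0) (m : ℕ) :
    (1 + a) ^ m = 1 + m * a := by
  rw [one_add_pow_of_pow_three_eq_zero (by rw [pow_succ, ha, zero_mul]) m, ha, mul_zero, add_zero]

lemma quadratic_mul_eq_one_add_mul_pow {a : R} (ha : a ^ 3 = 0) (x : R) (b₁ b₂ : ℕ) :
    (1 + (b₁ * a + b₂ * a ^ 2) * x + (b₁.choose 2 + 1) * a ^ 2 * x ^ 2)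
        * ((1 - a ^ 2 * x) ^ b₂ * (1 - a ^ 2 * x ^ 2))
      = (1 + a * x) ^ b₁ := by
  have hsq : (-(a ^ 2 * x)) ^ 2 = 0 := by
    linear_combination (a * x ^ 2) * ha
  rw [sub_eq_add_neg, one_add_pow_of_sq_eq_zero hsq,
    one_add_pow_of_pow_three_eq_zero (by rw [mul_pow, ha, zero_mul])]
  linear_combination (-(b₁ * x ^ 3 + (b₁.choose 2 + 1) * a * x ^ 4 + (b₁ * b₂ * x ^ 2
    + b₂ ^ 2 * a * x ^ 2 + b₂ * (b₁.choose 2 + 1) * a * x ^ 3) * (1 - a ^ 2 * x ^ 2))) * ha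

lemma coeff_eq_sum_range_of_mul_one_sub_X {f p : R⟦X⟧} (h : f * (1 - X) = p) (n : ℕ) :
    coeff n f = ∑ i ∈ range (n + 1), coeff i p := by
  induction n with
  | zero => simp [← h]
  | succ n ih =>
    rw [sum_range_succ, ← ih, ← h, mul_sub, mul_one, map_sub, coeff_succ_mul_X]
    ring

lemma coeff_eq_of_mk_span_X_pow_eq {m : ℕ} {f g : R⟦X⟧}
    (h : Ideal.Quotient.mk (Ideal.span {X ^ m}) f = Ideal.Quotient.mk _ g) {i : ℕ} (hi : i < m) :
    coeff i f = coeff i g := by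
  rw [Ideal.Quotient.eq, Ideal.mem_span_singleton] at h
  exact sub_eq_zero.mp (by simpa using X_pow_dvd_iff.mp h i hi)

end CommRing

abbrev TruncT : Type := PowerSeries ℤ ⧸ Ideal.span {(X : PowerSeries ℤ) ^ 3}

noncomputable def truncT : PowerSeries ℤ →+* TruncT := Ideal.Quotient.mk _

noncomputable def tBar : TruncT := truncT tVar

lemma tBar_pow_three : tBar ^ 3 = 0 := by
  rw [tBar, ← map_pow, truncT, Ideal.Quotient.eq_zero_iff_mem]
  exact Ideal.subset_span rfl

lemma map_truncT_gFactor (k j : ℕ) :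
    map truncT (gFactor k j : TQ) = 1 - C ((-tBar) ^ (2 * k + j)) * X ^ (k + 1) := by
  simp [gFactor, tBar]

lemma map_truncT_gFactor_eq_one {k j : ℕ} (h : 3 ≤ 2 * k + j) :
    map truncT (gFactor k j : TQ) = 1 := by
  rw [map_truncT_gFactor, pow_eq_zero_of_le h (by linear_combination -tBar_pow_three),
    map_zero, zero_mul, sub_zero]

lemma gPart_mul_prod (b₀ b₁ b₂ b₃ b₄ N : ℕ) :
    (gPart b₀ b₁ b₂ b₃ b₄ N : TQ) *
        ∏ k ∈ range N,
          ((gFactor k 0 : TQ) ^ b₀ * (gFactor k 2 : TQ) ^ b₂ * (gFactor k 4 : TQ) ^ b₄)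
      = ∏ k ∈ range N, ((gFactor k 1 : TQ) ^ b₁ * (gFactor k 3 : TQ) ^ b₃) := by
  have h : gPart b₀ b₁ b₂ b₃ b₄ N *
        ∏ k ∈ range N, (gFactor k 0 ^ b₀ * gFactor k 2 ^ b₂ * gFactor k 4 ^ b₄)
      = ∏ k ∈ range N, (gFactor k 1 ^ b₁ * gFactor k 3 ^ b₃) := by
    rw [gPart, ← prod_mul_distrib]
    exact prod_congr rfl fun k _ ↦ inv_mul_cancel_right _ _
  simpa using congrArg Units.val h

lemma map_truncT_gPart_mul (b₁ b₂ b₃ b₄ : ℕ) {N : ℕ} (hN : 2 ≤ N) :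
    map truncT (gPart 1 b₁ b₂ b₃ b₄ N : TQ)
        * ((1 - X) * ((1 - C (tBar ^ 2) * X) ^ b₂ * (1 - C (tBar ^ 2) * X ^ 2)))
      = (1 + C tBar * X) ^ b₁ := by
  have h := congrArg (map truncT) (gPart_mul_prod 1 b₁ b₂ b₃ b₄ N)
  simp only [map_mul, map_prod, map_pow] at h
  rw [← prod_range_mul_prod_Ico _ hN, ← prod_range_mul_prod_Ico _ hN,
    prod_eq_one (s := Ico 2 N), prod_eq_one (s := Ico 2 N)] at h
  · simp (disch := omega) only [prod_range_succ, prod_range_zero, map_truncT_gFactor_eq_one,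
      one_pow, one_mul, mul_one] at h
    simp only [map_truncT_gFactor, map_pow, map_neg] at h
    rw [map_pow]
    linear_combination h
  all_goals
    intro k hk
    obtain ⟨hk, -⟩ := mem_Ico.mp hk
    have h1 (j : ℕ) : map truncT (gFactor k j : TQ) = 1 := map_truncT_gFactor_eq_one (by omega)
    simp [h1]

lemma map_truncT_gPart_mul_one_sub_X (b₁ b₂ b₃ b₄ : ℕ) {N : ℕ} (hN : 2 ≤ N) :
    map truncT (gPart 1 b₁ b₂ b₃ b₄ N : TQ) * (1 - X)
      = 1 + C (b₁ * tBar + b₂ * tBar ^ 2) * X + C ((b₁.choose 2 + 1) * tBar ^ 2) * X ^ 2 := by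
  have hC : C tBar ^ 3 = 0 := by rw [← map_pow, tBar_pow_three, map_zero]
  have hunit : IsUnit ((1 - C (tBar ^ 2) * X) ^ b₂ * (1 - C (tBar ^ 2) * X ^ 2)) := by
    refine .mul (.pow _ ?_) ?_ <;> simp [isUnit_iff_constantCoeff]
  refine hunit.mul_left_inj.mp ?_
  rw [mul_assoc, map_truncT_gPart_mul b₁ b₂ b₃ b₄ hN,
    ← quadratic_mul_eq_one_add_mul_pow hC X b₁ b₂]
  simp only [map_add, map_mul, map_pow, map_natCast, map_one]

lemma truncT_coeff_gPart (b₁ b₂ b₃ b₄ : ℕ) {n N : ℕ} (hn : 2 ≤ n) (hN : 2 ≤ N) :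
    truncT (coeff n (gPart 1 b₁ b₂ b₃ b₄ N : TQ))
      = 1 + b₁ * tBar + (b₂ + b₁.choose 2 + 1) * tBar ^ 2 := by
  rw [← coeff_map,
    coeff_eq_sum_range_of_mul_one_sub_X (map_truncT_gPart_mul_one_sub_X b₁ b₂ b₃ b₄ hN),
    ← sum_range_add_sum_Ico _ (by omega : 3 ≤ n + 1), sum_eq_zero (s := Ico 3 (n + 1))]
  · simp only [sum_range_succ, sum_range_zero, (coeff _).map_add, coeff_one, coeff_C_mul, coeff_X,
      coeff_X_pow]
    norm_num
    ring
  · intro i hi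
    obtain ⟨hi, -⟩ := mem_Ico.mp hi
    simp only [(coeff _).map_add, coeff_one, coeff_C_mul, coeff_X, coeff_X_pow]
    simp [show i ≠ 0 by omega, show i ≠ 1 by omega, show i ≠ 2 by omega]

/-- The coefficient of `t^2 q^n` (`n ≥ 2`) in Göttsche's generating function
`G(t,q)` with `b₀ = 1` equals `b₂ + C(b₁,2) + 1`:
`b₂(X^[n]) = b₂(X) + C(b₁(X),2) + 1` for `n ≥ 2`. -/
theorem stmt9 (b1 b2 b3 b4 : ℕ) (n N : ℕ) (hn : 2 ≤ n) (hN : n ≤ N) :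
    PowerSeries.coeff 2
      (PowerSeries.coeff n ((gPart 1 b1 b2 b3 b4 N : TQˣ) : TQ))
      = b2 + Nat.choose b1 2 + 1 := by
  have h : truncT (coeff n (gPart 1 b1 b2 b3 b4 N : TQ))
      = truncT (1 + C (b1 : ℤ) * X + C (b2 + b1.choose 2 + 1 : ℤ) * X ^ 2) := by
    rw [truncT_coeff_gPart b1 b2 b3 b4 hn (hn.trans hN)]
    simp [tBar]
  rw [coeff_eq_of_mk_span_X_pow_eq h (by norm_num : 2 < 3)]
  simp only [(coeff _).map_add, coeff_one, coeff_C_mul, coeff_X, coeff_X_pow]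
  norm_num
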